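/- Let A be a real symmetric n×n completely positive matrix with rank r ≥ 2. Then A admits a decomposition A = U Uᵀ with U ∈ ℝ^{n×k} entrywise nonnegative where k ≤ r(r+1)/2 − 1; that is, the cp-rank of A is at most r(r+1)/2 − 1. -/

import Mathlib

/-!
Write `A = ∑ᵢ cᵢ cᵢᵀ` with `cᵢ ≥ 0` and `k ≥ r(r+1)/2` terms. The `cᵢ` lie in the column space `V`
of `A`, of dimension `r`, so the matrices `Fᵢ = cᵢ cᵢᵀ` lie in the span of the symmetrized products
`a bᵀ + b aᵀ` (`a, b ∈ V`), of dimension at most `r(r+1)/2`.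

If the `Fᵢ` are linearly dependent, subtracting a multiple of a linear relation removes a term, as in
Carathéodory's theorem. Otherwise they span that space, so for `p ≠ q` and `x(u) = c_p + u c_q` we can
write `x(u) x(u)ᵀ = ∑ᵢ γᵢ(u) Fᵢ` with `γ` continuous in `u`. At `u = 0` the largest coefficient is
`γ_p`, for large `u` it is not, so at some `u ≥ 0` it is attained both at `p` and at some `j ≠ p`.
Then `A = t x xᵀ + ∑ᵢ (1 - t γᵢ) Fᵢ` with `t = 1/γ_p(u)` has nonnegative weights vanishing at `p`
and `j`: replacing `c_p` by `√t x` gives a decomposition with `k - 1` terms.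
-/

open Matrix Module Submodule

theorem Submodule.finrank_map₂_le_of_symm {K M N : Type*} [Field K] [AddCommGroup M] [Module K M]
    [AddCommGroup N] [Module K N] (f : M →ₗ[K] M →ₗ[K] N) (hf : ∀ a b, f a b = f b a)
    (V : Submodule K M) [FiniteDimensional K V] :
    finrank K (map₂ f V V) ≤ finrank K V * (finrank K V + 1) / 2 := by
  let b := finBasis K V
  have hb : span K (Set.range (V.subtype ∘ b)) = V := by
    rw [Set.range_comp, span_image, b.span_eq, map_subtype_top]
  let G : Sym2 (Fin (finrank K V)) → N := Sym2.lift ⟨fun i j => f (b i) (b j), fun i j => hf _ _⟩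
  have hle : map₂ f V V ≤ span K (Set.range G) := by
    conv_lhs => rw [← hb, map₂_span_span]
    refine span_mono ?_
    rintro _ ⟨_, ⟨i, rfl⟩, _, ⟨j, rfl⟩, rfl⟩
    exact ⟨s(i, j), rfl⟩
  have := FiniteDimensional.span_of_finite K (Set.finite_range G)
  calc finrank K (map₂ f V V)
      ≤ finrank K (span K (Set.range G)) := finrank_mono hle
    _ ≤ Fintype.card (Sym2 (Fin (finrank K V))) := finrank_range_le_card G
    _ = _ := by rw [Sym2.card, Fintype.card_fin, Nat.choose_two_right, Nat.add_sub_cancel, mul_comm]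

theorem exists_mem_Icc_tie_of_continuous {κ : Type*} [Fintype κ] {γ : κ → ℝ → ℝ}
    (hγ : ∀ i, Continuous (γ i)) {a b : ℝ} (hab : a ≤ b) {p q : κ} (ha : ∀ i, γ i a ≤ γ p a)
    (hb : γ p b < γ q b) :
    ∃ u ∈ Set.Icc a b, (∀ i, γ i u ≤ γ p u) ∧ ∃ j ≠ p, γ j u = γ p u := by
  classical
  have hq : q ∈ Finset.univ.erase p := Finset.mem_erase.mpr ⟨fun h => (h ▸ hb).false, Finset.mem_univ _⟩
  set gap := fun u => (Finset.univ.erase p).sup' ⟨q, hq⟩ (fun i => γ i u) - γ p u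
  have hgap : Continuous gap :=
    (Continuous.finset_sup'_apply _ fun i _ => hγ i).sub (hγ p)
  have hgap_a : gap a ≤ 0 := sub_nonpos.mpr (Finset.sup'_le _ _ fun i _ => ha i)
  have hgap_b : 0 ≤ gap b := sub_nonneg.mpr ((hb.le).trans (Finset.le_sup' (fun i => γ i b) hq))
  obtain ⟨u, hu, hu0⟩ := intermediate_value_Icc hab hgap.continuousOn ⟨hgap_a, hgap_b⟩
  have hsup : (Finset.univ.erase p).sup' ⟨q, hq⟩ (fun i => γ i u) = γ p u := sub_eq_zero.mp hu0
  refine ⟨u, hu, fun i => ?_, ?_⟩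
  · rcases eq_or_ne i p with rfl | hip
    · exact le_rfl
    · exact hsup ▸ Finset.le_sup' (fun i => γ i u) (Finset.mem_erase.mpr ⟨hip, Finset.mem_univ _⟩)
  · obtain ⟨j, hj, hju⟩ := Finset.exists_mem_eq_sup' ⟨q, hq⟩ (fun i => γ i u)
    exact ⟨j, Finset.ne_of_mem_erase hj, hju ▸ hsup⟩

namespace Matrix

variable {ι : Type*}

section SymVecMulVec

variable (R : Type*) [CommSemiring R]

def symVecMulVec : (ι → R) →ₗ[R] (ι → R) →ₗ[R] Matrix ι ι R :=
  vecMulVecBilin R R + (vecMulVecBilin R R).flip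

variable {R}

@[simp]
theorem symVecMulVec_apply (a b : ι → R) :
    symVecMulVec R a b = vecMulVec a b + vecMulVec b a :=
  rfl

theorem symVecMulVec_comm (a b : ι → R) : symVecMulVec R a b = symVecMulVec R b a := by
  simp [add_comm]

end SymVecMulVec

theorem symVecMulVec_mem_span_of_linearIndependent [Fintype ι] {κ : Type*} [Fintype κ]
    {c : κ → ι → ℝ} (hF : LinearIndependent ℝ fun i => vecMulVec (c i) (c i))
    (hk : finrank ℝ (span ℝ (Set.range c)) * (finrank ℝ (span ℝ (Set.range c)) + 1) / 2 ≤
      Fintype.card κ) (p q : κ) :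
    symVecMulVec ℝ (c p) (c q) ∈ span ℝ (Set.range fun i => vecMulVec (c i) (c i)) := by
  set V := span ℝ (Set.range c)
  have hcV (i : κ) : c i ∈ V := subset_span (Set.mem_range_self i)
  have hle : span ℝ (Set.range fun i => vecMulVec (c i) (c i)) ≤ map₂ (symVecMulVec ℝ) V V := by
    refine span_le.mpr (Set.range_subset_iff.mpr fun i => ?_)
    have h := smul_mem _ (2⁻¹ : ℝ) (apply_mem_map₂ (symVecMulVec ℝ) (hcV i) (hcV i))
    rwa [symVecMulVec_apply, ← two_smul ℝ, smul_smul, inv_mul_cancel₀ two_ne_zero, one_smul] at h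
  have heq := eq_of_le_of_finrank_le hle <| by
    rw [finrank_span_eq_card hF]
    exact (finrank_map₂_le_of_symm _ symVecMulVec_comm V).trans hk
  exact heq ▸ apply_mem_map₂ _ (hcV p) (hcV q)

def HasCPDecomposition (A : Matrix ι ι ℝ) (m : ℕ) : Prop :=
  ∃ c : Fin m → ι → ℝ, (∀ i, 0 ≤ c i) ∧ A = ∑ i, vecMulVec (c i) (c i)

theorem mul_transpose_self_eq_sum_vecMulVec {R κ : Type*} [NonUnitalNonAssocSemiring R]
    [Fintype κ] (U : Matrix ι κ R) :
    U * Uᵀ = ∑ i, vecMulVec (U.col i) (U.col i) := by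
  ext a b
  simp [mul_apply, sum_apply, vecMulVec_apply]

theorem hasCPDecomposition_iff {A : Matrix ι ι ℝ} {m : ℕ} :
    HasCPDecomposition A m ↔ ∃ U : Matrix ι (Fin m) ℝ, (∀ i j, 0 ≤ U i j) ∧ A = U * Uᵀ := by
  constructor
  · rintro ⟨c, hc, rfl⟩
    exact ⟨(of c)ᵀ, fun x i => hc i x, (mul_transpose_self_eq_sum_vecMulVec _).symm⟩
  · rintro ⟨U, hU, rfl⟩
    exact ⟨U.col, fun i x => hU x i, mul_transpose_self_eq_sum_vecMulVec U⟩

theorem rank_sum_vecMulVec_self [Fintype ι] {m : ℕ} (c : Fin m → ι → ℝ) :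
    (∑ i, vecMulVec (c i) (c i)).rank = finrank ℝ (span ℝ (Set.range c)) := by
  have h : (of c)ᵀ * (of c)ᵀᵀ = ∑ i, vecMulVec (c i) (c i) :=
    mul_transpose_self_eq_sum_vecMulVec _
  rw [← h, rank_self_mul_transpose, rank_eq_finrank_span_cols]
  rfl

theorem vecMulVec_smul_self {R : Type*} [CommSemiring R] (t : R) (v : ι → R) :
    vecMulVec (t • v) (t • v) = (t * t) • vecMulVec v v := by
  rw [smul_vecMulVec, vecMulVec_smul, smul_smul]

theorem hasCPDecomposition_of_eq_sum_smul {m : ℕ} {c : Fin (m + 1) → ι → ℝ} (hc : ∀ i, 0 ≤ c i)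
    {w : Fin (m + 1) → ℝ} (hw : ∀ i, 0 ≤ w i) {j : Fin (m + 1)} (hj : w j = 0) :
    HasCPDecomposition (∑ i, w i • vecMulVec (c i) (c i)) m := by
  refine ⟨fun i => √(w (j.succAbove i)) • c (j.succAbove i),
    fun i => smul_nonneg (Real.sqrt_nonneg _) (hc _), ?_⟩
  rw [Fin.sum_univ_succAbove _ j, hj, zero_smul, zero_add]
  simp only [vecMulVec_smul_self, Real.mul_self_sqrt (hw _)]

theorem hasCPDecomposition_of_not_linearIndependent {m : ℕ} {c : Fin (m + 1) → ι → ℝ}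
    (hc : ∀ i, 0 ≤ c i) (hF : ¬LinearIndependent ℝ fun i => vecMulVec (c i) (c i)) :
    HasCPDecomposition (∑ i, vecMulVec (c i) (c i)) m := by
  obtain ⟨g₀, hg₀, i₀, hi₀⟩ := Fintype.not_linearIndependent_iff.mp hF
  set g := (g₀ i₀)⁻¹ • g₀
  have hg : ∑ i, g i • vecMulVec (c i) (c i) = 0 := by
    simp only [g, Pi.smul_apply, smul_eq_mul, mul_smul, ← Finset.smul_sum, hg₀, smul_zero]
  obtain ⟨j, -, hj⟩ := Finset.univ.exists_max_image g Finset.univ_nonempty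
  have hj₀ : 0 < g j := by
    refine lt_of_lt_of_le ?_ (hj i₀ (Finset.mem_univ _))
    simp [g, hi₀]
  -- subtract the largest multiple of the relation that keeps all weights nonnegative
  have hsum : ∑ i, vecMulVec (c i) (c i) = ∑ i, (1 - (g j)⁻¹ * g i) • vecMulVec (c i) (c i) := by
    simp only [sub_smul, one_smul, mul_smul, Finset.sum_sub_distrib, ← Finset.smul_sum, hg,
      smul_zero, sub_zero]
  rw [hsum]
  refine hasCPDecomposition_of_eq_sum_smul hc (fun i => ?_) (j := j)
    (by rw [inv_mul_cancel₀ hj₀.ne', sub_self])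
  rw [sub_nonneg, inv_mul_le_one₀ hj₀]
  exact hj i (Finset.mem_univ _)

theorem exists_pos_of_vecMulVec_self_eq_sum {κ : Type*} [Fintype κ] {x : ι → ℝ} (hx : x ≠ 0)
    {c : κ → ι → ℝ} {γ : κ → ℝ} (h : vecMulVec x x = ∑ i, γ i • vecMulVec (c i) (c i)) :
    ∃ i, 0 < γ i := by
  by_contra! hγ
  obtain ⟨a, ha⟩ := Function.ne_iff.mp hx
  have hdiag : x a * x a = ∑ i, γ i * (c i a * c i a) := by
    simpa [sum_apply, vecMulVec_apply] using congr_fun (congr_fun h a) a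
  have : ∑ i, γ i * (c i a * c i a) ≤ 0 :=
    Finset.sum_nonpos fun i _ => mul_nonpos_of_nonpos_of_nonneg (hγ i) (mul_self_nonneg _)
  exact (mul_self_pos.mpr ha).not_ge (hdiag ▸ this)

theorem hasCPDecomposition_of_vecMulVec_self_eq_sum {m : ℕ} {c : Fin (m + 1) → ι → ℝ}
    (hc : ∀ i, 0 ≤ c i) {x : ι → ℝ} (hx : 0 ≤ x) (hx₀ : x ≠ 0) {γ : Fin (m + 1) → ℝ}
    (h : vecMulVec x x = ∑ i, γ i • vecMulVec (c i) (c i)) {p j : Fin (m + 1)}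
    (hmax : ∀ i, γ i ≤ γ p) (hjp : j ≠ p) (hj : γ j = γ p) :
    HasCPDecomposition (∑ i, vecMulVec (c i) (c i)) m := by
  have hγp : 0 < γ p := by
    obtain ⟨i, hi⟩ := exists_pos_of_vecMulVec_self_eq_sum hx₀ h
    exact hi.trans_le (hmax i)
  set t := (γ p)⁻¹
  set w := Function.update (fun i => 1 - t * γ i) p t
  set c' := Function.update c p x
  have hterm : (fun i => w i • vecMulVec (c' i) (c' i)) =
      Function.update (fun i => (1 - t * γ i) • vecMulVec (c i) (c i)) p (t • vecMulVec x x) := by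
    ext1 i
    rcases eq_or_ne i p with rfl | hip <;> simp [w, c', *]
  have hsum : ∑ i, vecMulVec (c i) (c i) = ∑ i, w i • vecMulVec (c' i) (c' i) := by
    have hp : (1 - t * γ p) • vecMulVec (c p) (c p) = 0 := by simp [t, hγp.ne']
    rw [hterm, Finset.sum_update_of_mem (Finset.mem_univ p), Finset.sdiff_singleton_eq_erase,
      Finset.sum_erase (f := fun i => (1 - t * γ i) • vecMulVec (c i) (c i)) _ hp]
    simp only [sub_smul, one_smul, mul_smul, Finset.sum_sub_distrib, ← Finset.smul_sum, ← h]
    abel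
  rw [hsum]
  refine hasCPDecomposition_of_eq_sum_smul (j := j) (fun i => ?_) (fun i => ?_) ?_
  · rcases eq_or_ne i p with rfl | hip
    · simpa [c'] using hx
    · simpa [c', hip] using hc i
  · rcases eq_or_ne i p with rfl | hip
    · simpa [w, t] using hγp.le
    · simpa [w, hip, t, ← div_eq_inv_mul, div_le_one hγp] using hmax i
  · simp [w, hjp, hj, t, hγp.ne']

theorem hasCPDecomposition_of_symVecMulVec_mem_span {m : ℕ} {c : Fin (m + 1) → ι → ℝ}
    (hc : ∀ i, 0 ≤ c i) {p q : Fin (m + 1)} (hpq : p ≠ q) (hp : c p ≠ 0)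
    (hS : symVecMulVec ℝ (c p) (c q) ∈ span ℝ (Set.range fun i => vecMulVec (c i) (c i))) :
    HasCPDecomposition (∑ i, vecMulVec (c i) (c i)) m := by
  obtain ⟨μ, hμ⟩ := (mem_span_range_iff_exists_fun ℝ).mp hS
  set x : ℝ → ι → ℝ := fun u => c p + u • c q
  -- `x xᵀ = c_p c_pᵀ + u² c_q c_qᵀ + u (c_p c_qᵀ + c_q c_pᵀ)`, expanded with `hμ`
  set γ : Fin (m + 1) → ℝ → ℝ := fun i u =>
    (if i = p then 1 else 0) + u ^ 2 * (if i = q then 1 else 0) + u * μ i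
  have hx (u : ℝ) : vecMulVec (x u) (x u) = ∑ i, γ i u • vecMulVec (c i) (c i) := by
    simp only [γ, add_smul, mul_smul, Finset.sum_add_distrib, ← Finset.smul_sum, hμ, ite_smul,
      one_smul, zero_smul, Finset.sum_ite_eq', Finset.mem_univ, if_true, x, symVecMulVec_apply,
      add_vecMulVec, vecMulVec_add, smul_vecMulVec, vecMulVec_smul]
    module
  have hγ₀ (i : Fin (m + 1)) : γ i 0 ≤ γ p 0 := by
    simp only [γ]
    split_ifs <;> simp
  have hγb : γ p (2 + |μ p| + |μ q|) < γ q (2 + |μ p| + |μ q|) := by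
    simp only [γ, if_pos, if_neg hpq, if_neg hpq.symm]
    nlinarith [abs_nonneg (μ p), abs_nonneg (μ q), neg_abs_le (μ p), le_abs_self (μ p),
      neg_abs_le (μ q), le_abs_self (μ q)]
  obtain ⟨u, ⟨hu, -⟩, hmax, j, hjp, hj⟩ :=
    exists_mem_Icc_tie_of_continuous (fun i => by fun_prop) (by positivity) hγ₀ hγb
  have hxu : 0 ≤ x u := add_nonneg (hc p) (smul_nonneg hu (hc q))
  have hxu₀ : x u ≠ 0 := fun h0 =>
    hp (le_antisymm (h0 ▸ le_add_of_nonneg_right (smul_nonneg hu (hc q))) (hc p))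
  exact hasCPDecomposition_of_vecMulVec_self_eq_sum hc hxu hxu₀ (hx u) hmax hjp hj

theorem hasCPDecomposition_pred_of_le [Fintype ι] {m : ℕ} {c : Fin (m + 1) → ι → ℝ}
    (hc : ∀ i, 0 ≤ c i) (hm : 0 < m)
    (hk : finrank ℝ (span ℝ (Set.range c)) * (finrank ℝ (span ℝ (Set.range c)) + 1) / 2 ≤ m + 1) :
    HasCPDecomposition (∑ i, vecMulVec (c i) (c i)) m := by
  by_cases hF : LinearIndependent ℝ fun i => vecMulVec (c i) (c i)
  · have h0 : (0 : Fin (m + 1)) ≠ Fin.last m := by simp [Fin.ext_iff, hm.ne]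
    have hc0 : c 0 ≠ 0 := fun h => hF.ne_zero 0 (by simp [h])
    exact hasCPDecomposition_of_symVecMulVec_mem_span hc h0 hc0
      (symVecMulVec_mem_span_of_linearIndependent hF (by simpa using hk) _ _)
  · exact hasCPDecomposition_of_not_linearIndependent hc hF

theorem HasCPDecomposition.exists_le [Fintype ι] {A : Matrix ι ι ℝ} (hr : 2 ≤ A.rank) {k : ℕ}
    (h : HasCPDecomposition A k) :
    ∃ m ≤ A.rank * (A.rank + 1) / 2 - 1, HasCPDecomposition A m := by
  have hN : 3 ≤ A.rank * (A.rank + 1) / 2 := by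
    have := Nat.mul_le_mul hr (Nat.add_le_add_right hr 1)
    omega
  induction k with
  | zero => exact ⟨0, Nat.zero_le _, h⟩
  | succ k ih =>
    by_cases hk : k + 1 ≤ A.rank * (A.rank + 1) / 2 - 1
    · exact ⟨k + 1, hk, h⟩
    obtain ⟨c, hc, rfl⟩ := h
    rw [rank_sum_vecMulVec_self] at hN hk
    exact ih (hasCPDecomposition_pred_of_le hc (by omega) (by omega))

end Matrix

/-- A completely positive matrix of rank `r ≥ 2` admits a nonnegative factorization
`A = U Uᵀ` with at most `r(r+1)/2 - 1` columns. -/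
theorem cpRank_le_of_completelyPositive (n : ℕ) (A : Matrix (Fin n) (Fin n) ℝ)
    (hA : ∃ (k : ℕ) (U : Matrix (Fin n) (Fin k) ℝ),
      (∀ i j, 0 ≤ U i j) ∧ A = U * Uᵀ)
    (hr : 2 ≤ A.rank) :
    ∃ (k : ℕ) (U : Matrix (Fin n) (Fin k) ℝ),
      (∀ i j, 0 ≤ U i j) ∧ A = U * Uᵀ ∧ k ≤ A.rank * (A.rank + 1) / 2 - 1 := by
  obtain ⟨k, hk⟩ := hA
  obtain ⟨m, hm, h⟩ := (hasCPDecomposition_iff.mpr hk).exists_le hr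
  obtain ⟨U, hU, hAU⟩ := hasCPDecomposition_iff.mp h
  exact ⟨m, U, hU, hAU, hm⟩
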